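/- (Probabilistic McShane extension) Let (G,D,⋆) be a probabilistic metric space with ⋆ sup-continuous, A ⊆ G nonempty, and f : A → Δ⁺ a probabilistic 1-Lipschitz map on A. Then the map f̃(x) := sup_{a∈A} D(a,x) ⋆ f(a) is a probabilistic 1-Lipschitz map on G whose restriction to A equals f. -/

import Mathlib

open Filter Topology Set

/-- A (real-domain representation of a) distribution function in Δ⁺ :
nondecreasing, with values in [0,1], left-continuous, vanishing on (-∞,0]. -/
def MemDP (f : ℝ → ℝ) : Prop :=
  Monotone f ∧ (∀ t, 0 ≤ f t) ∧ (∀ t, f t ≤ 1) ∧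
  (∀ t : ℝ, Tendsto f (nhdsWithin t (Set.Iio t)) (nhds (f t))) ∧
  (∀ t ≤ (0:ℝ), f t = 0)

/-- The distribution H₀. -/
noncomputable def H0 : ℝ → ℝ := fun t => if 0 < t then 1 else 0

/-- The distribution H_∞ (zero at every finite point). -/
def Hinf : ℝ → ℝ := fun _ => 0

/-- Pointwise order on distribution functions. -/
def dpLE (f g : ℝ → ℝ) : Prop := ∀ t, f t ≤ g t

/-- Triangle function on Δ⁺. -/
structure IsTriangle (star : (ℝ → ℝ) → (ℝ → ℝ) → (ℝ → ℝ)) : Prop where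
  mem : ∀ f g, MemDP f → MemDP g → MemDP (star f g)
  comm : ∀ f g, MemDP f → MemDP g → star f g = star g f
  assoc : ∀ f g h, MemDP f → MemDP g → MemDP h →
    star f (star g h) = star (star f g) h
  ident : ∀ f, MemDP f → star f H0 = f
  mono : ∀ f g h, MemDP f → MemDP g → MemDP h → dpLE f g → dpLE (star f h) (star g h)

/-- Sup-continuity of a triangle function (suprema in Δ⁺ are pointwise). -/
def SupCont (star : (ℝ → ℝ) → (ℝ → ℝ) → (ℝ → ℝ)) : Prop :=
  ∀ (I : Type) (_ : Nonempty I) (F : I → ℝ → ℝ) (L : ℝ → ℝ),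
    (∀ i, MemDP (F i)) → MemDP L →
    ∀ t, (⨆ i, star (F i) L t) = star (fun s => ⨆ i, F i s) L t

/-- Weak convergence in Δ⁺: pointwise convergence at each continuity point of the limit. -/
def WConv (Fn : ℕ → ℝ → ℝ) (F : ℝ → ℝ) : Prop :=
  ∀ t, ContinuousAt F t → Tendsto (fun n => Fn n t) atTop (nhds (F t))

/-- Continuity of a triangle function w.r.t. weak convergence. -/
def StarCont (star : (ℝ → ℝ) → (ℝ → ℝ) → (ℝ → ℝ)) : Prop :=
  ∀ (Fn Ln : ℕ → ℝ → ℝ) (F L : ℝ → ℝ),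
    (∀ n, MemDP (Fn n)) → (∀ n, MemDP (Ln n)) → MemDP F → MemDP L →
    WConv Fn F → WConv Ln L → WConv (fun n => star (Fn n) (Ln n)) (star F L)

/-- Probabilistic metric space (G, D, ⋆). -/
structure IsPMS {G : Type} (D : G → G → ℝ → ℝ)
    (star : (ℝ → ℝ) → (ℝ → ℝ) → (ℝ → ℝ)) : Prop where
  tri : IsTriangle star
  mem : ∀ p q, MemDP (D p q)
  eq_iff : ∀ p q, D p q = H0 ↔ p = q
  symm : ∀ p q, D p q = D q p
  triangle_ineq : ∀ p q r, dpLE (star (D p q) (D q r)) (D p r)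

/-- Probabilistic invariant metric group. -/
structure IsPIMG {G : Type} [Group G] (D : G → G → ℝ → ℝ)
    (star : (ℝ → ℝ) → (ℝ → ℝ) → (ℝ → ℝ)) extends IsPMS D star : Prop where
  invL : ∀ p q r : G, D (r * p) (r * q) = D p q
  invR : ∀ p q r : G, D (p * r) (q * r) = D p q

/-- Probabilistic 1-Lipschitz map. -/
def Lip1 {G : Type} (D : G → G → ℝ → ℝ) (star : (ℝ → ℝ) → (ℝ → ℝ) → (ℝ → ℝ))
    (f : G → ℝ → ℝ) : Prop :=
  (∀ x, MemDP (f x)) ∧ ∀ x y, dpLE (star (D x y) (f y)) (f x)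

/-- δ_a(y) = D(y,a). -/
def dlt {G : Type} (D : G → G → ℝ → ℝ) (a : G) : G → ℝ → ℝ := fun y => D y a

/-- Sup-convolution (f ⊙ g)(x) = sup_{yz = x} f(y) ⋆ g(z), pointwise. -/
noncomputable def sconv {G : Type} [Group G] (star : (ℝ → ℝ) → (ℝ → ℝ) → (ℝ → ℝ))
    (f g : G → ℝ → ℝ) : G → ℝ → ℝ :=
  fun x t => ⨆ y : G, star (f (x * y⁻¹)) (g y) t

/-- Cauchy sequence for a probabilistic metric: D(a_n, a_p) → H₀ weakly. -/
def PCauchy {G : Type} (D : G → G → ℝ → ℝ) (a : ℕ → G) : Prop :=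
  ∀ t > (0:ℝ), ∀ ε > (0:ℝ), ∃ N, ∀ n ≥ N, ∀ p ≥ N, 1 - ε ≤ D (a n) (a p) t

/-- Π(G): probabilistic 1-Lipschitz maps that are pointwise weak limits of δ_{a_n}
for some Cauchy sequence (a_n). -/
def InPi {G : Type} (D : G → G → ℝ → ℝ) (star : (ℝ → ℝ) → (ℝ → ℝ) → (ℝ → ℝ))
    (f : G → ℝ → ℝ) : Prop :=
  Lip1 D star f ∧ ∃ a : ℕ → G, PCauchy D a ∧ ∀ x, WConv (fun n => D (a n) x) (f x)

/-- 𝔻(f,g) = sup_{x∈G} f(x) ⋆ g(x), pointwise. -/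
noncomputable def DD {G : Type} (star : (ℝ → ℝ) → (ℝ → ℝ) → (ℝ → ℝ))
    (f g : G → ℝ → ℝ) : ℝ → ℝ :=
  fun t => ⨆ x : G, star (f x) (g x) t

/-- t-norm on [0,1]. -/
structure IsTnorm (T : ℝ → ℝ → ℝ) : Prop where
  mem : ∀ x ∈ Set.Icc (0:ℝ) 1, ∀ y ∈ Set.Icc (0:ℝ) 1, T x y ∈ Set.Icc (0:ℝ) 1
  comm : ∀ x y, T x y = T y x
  assoc : ∀ x y z, T x (T y z) = T (T x y) z
  mono : ∀ x y z, y ≤ z → T x y ≤ T x z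
  one : ∀ x ∈ Set.Icc (0:ℝ) 1, T x 1 = x

/-- Left-continuity of a t-norm (in each variable; by commutativity one suffices). -/
def LeftCtsTnorm (T : ℝ → ℝ → ℝ) : Prop :=
  ∀ y x : ℝ, Tendsto (fun s => T s y) (nhdsWithin x (Set.Iio x)) (nhds (T x y))

/-- The triangle function ⋆_T : (F ⋆_T L)(t) = sup_{s+u=t} T(F(s), L(u)). -/
noncomputable def starT (T : ℝ → ℝ → ℝ) (f g : ℝ → ℝ) : ℝ → ℝ :=
  fun t => ⨆ s : ℝ, T (f s) (g (t - s))

/-!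
The extension is the pointwise supremum of the maps `x ↦ D(a,x) ⋆ f(a)`, `a ∈ A`. Each of them
is 1-Lipschitz by the triangle inequality `D(a,y) ⋆ D(y,x) ≤ D(a,x)`, and sup-continuity of `⋆`
lets the Lipschitz inequality pass to the supremum. At a point `a ∈ A` every term is at most
`f(a)` because `f` is 1-Lipschitz on `A`, and the term of `a` itself is
`D(a,a) ⋆ f(a) = H₀ ⋆ f(a) = f(a)`.
-/

theorem Monotone.tendsto_nhdsLT_iff_lowerSemicontinuousWithinAt {α β : Type*}
    [TopologicalSpace α] [Preorder α] [TopologicalSpace β] [LinearOrder β] [OrderTopology β]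
    {f : α → β} (hf : Monotone f) (t : α) :
    Tendsto f (𝓝[<] t) (𝓝 (f t)) ↔ LowerSemicontinuousWithinAt f (Iio t) t := by
  have hupper : UpperSemicontinuousWithinAt f (Iio t) t := fun y hy =>
    eventually_nhdsWithin_of_forall fun s hs => (hf (le_of_lt hs)).trans_lt hy
  exact continuousWithinAt_iff_lower_upperSemicontinuousWithinAt.trans (and_iff_left hupper)

theorem bddAbove_range_of_memDP {I : Type*} {F : I → ℝ → ℝ} (hF : ∀ i, MemDP (F i)) (t : ℝ) :
    BddAbove (range fun i => F i t) :=
  ⟨1, by rintro _ ⟨i, rfl⟩; exact (hF i).2.2.1 t⟩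

theorem memDP_iSup {I : Type*} [Nonempty I] {F : I → ℝ → ℝ} (hF : ∀ i, MemDP (F i)) :
    MemDP fun t => ⨆ i, F i t := by
  have hmono : Monotone fun t => ⨆ i, F i t := fun s t hst =>
    ciSup_mono (bddAbove_range_of_memDP hF t) fun i => (hF i).1 hst
  refine ⟨hmono, fun t => ?_, fun t => ciSup_le fun i => (hF i).2.2.1 t, fun t => ?_,
    fun t ht => by simp only [(hF _).2.2.2.2 t ht, ciSup_const]⟩
  · obtain ⟨i⟩ := ‹Nonempty I›
    exact ((hF i).2.1 t).trans (le_ciSup (bddAbove_range_of_memDP hF t) i)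
  · refine (hmono.tendsto_nhdsLT_iff_lowerSemicontinuousWithinAt t).2 ?_
    exact lowerSemicontinuousWithinAt_ciSup (.of_forall (bddAbove_range_of_memDP hF))
      fun i => ((hF i).1.tendsto_nhdsLT_iff_lowerSemicontinuousWithinAt t).1 ((hF i).2.2.2.1 t)

theorem memDP_H0 : MemDP H0 := by
  have hmono : Monotone H0 := fun s t hst => by
    by_cases hs : 0 < s
    · simp [H0, hs, hs.trans_le hst]
    · simp only [H0, hs, if_false]; split_ifs <;> norm_num
  refine ⟨hmono, fun t => by unfold H0; split_ifs <;> norm_num,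
    fun t => by unfold H0; split_ifs <;> norm_num, fun t => ?_, fun t ht => if_neg ht.not_gt⟩
  rcases le_or_gt t 0 with ht | ht
  · refine tendsto_const_nhds.congr' ?_
    filter_upwards [self_mem_nhdsWithin] with s hs
    simp [H0, ht.not_gt, (lt_of_lt_of_le hs ht).not_gt]
  · refine tendsto_const_nhds.congr' ?_
    filter_upwards [Ioo_mem_nhdsLT ht] with s hs
    simp [H0, ht, hs.1]

section TriangleFunction

variable {star : (ℝ → ℝ) → (ℝ → ℝ) → (ℝ → ℝ)}

theorem IsTriangle.H0_star (hstar : IsTriangle star) {F : ℝ → ℝ} (hF : MemDP F) :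
    star H0 F = F := by
  rw [hstar.comm _ _ memDP_H0 hF, hstar.ident _ hF]

theorem SupCont.star_iSup {I : Type} [Nonempty I] (hstar : IsTriangle star)
    (hsc : SupCont star) {F : I → ℝ → ℝ} {L : ℝ → ℝ} (hF : ∀ i, MemDP (F i)) (hL : MemDP L)
    (t : ℝ) : star L (fun s => ⨆ i, F i s) t = ⨆ i, star L (F i) t := by
  rw [hstar.comm _ _ hL (memDP_iSup hF), ← hsc I inferInstance F L hF hL t]
  exact iSup_congr fun i => by rw [hstar.comm _ _ (hF i) hL]

end TriangleFunction

namespace IsPMS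

variable {G : Type} {D : G → G → ℝ → ℝ} {star : (ℝ → ℝ) → (ℝ → ℝ) → (ℝ → ℝ)}

theorem self_star (h : IsPMS D star) (a : G) {F : ℝ → ℝ} (hF : MemDP F) :
    star (D a a) F = F := by
  rw [(h.eq_iff a a).2 rfl, h.tri.H0_star hF]

theorem star_star_le (h : IsPMS D star) (x y a : G) {F : ℝ → ℝ} (hF : MemDP F) :
    dpLE (star (D x y) (star (D a y) F)) (star (D a x) F) := by
  have hreorder : star (D x y) (D a y) = star (D a y) (D y x) := by
    rw [h.tri.comm _ _ (h.mem x y) (h.mem a y), h.symm x y]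
  rw [h.tri.assoc _ _ _ (h.mem x y) (h.mem a y) hF, hreorder]
  exact h.tri.mono _ _ _ (h.tri.mem _ _ (h.mem a y) (h.mem y x)) (h.mem a x) hF
    (h.triangle_ineq a y x)

end IsPMS

noncomputable def mcShaneExt {G : Type} (D : G → G → ℝ → ℝ)
    (star : (ℝ → ℝ) → (ℝ → ℝ) → (ℝ → ℝ)) (A : Set G) (f : G → ℝ → ℝ) : G → ℝ → ℝ :=
  fun x t => ⨆ a : A, star (D a x) (f a) t

section McShane

variable {G : Type} {D : G → G → ℝ → ℝ} {star : (ℝ → ℝ) → (ℝ → ℝ) → (ℝ → ℝ)} {A : Set G}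
  {f : G → ℝ → ℝ}

theorem memDP_mcShaneExt_term (h : IsPMS D star) (hmem : ∀ a ∈ A, MemDP (f a)) (x : G)
    (a : A) : MemDP (star (D a x) (f a)) :=
  h.tri.mem _ _ (h.mem a x) (hmem a a.2)

theorem memDP_mcShaneExt [Nonempty A] (h : IsPMS D star) (hmem : ∀ a ∈ A, MemDP (f a))
    (x : G) : MemDP (mcShaneExt D star A f x) :=
  memDP_iSup (memDP_mcShaneExt_term h hmem x)

theorem lip1_mcShaneExt [Nonempty A] (h : IsPMS D star) (hsc : SupCont star)
    (hmem : ∀ a ∈ A, MemDP (f a)) : Lip1 D star (mcShaneExt D star A f) := by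
  refine ⟨memDP_mcShaneExt h hmem, fun x y t => ?_⟩
  unfold mcShaneExt
  rw [hsc.star_iSup h.tri (memDP_mcShaneExt_term h hmem y) (h.mem x y)]
  exact ciSup_mono (bddAbove_range_of_memDP (memDP_mcShaneExt_term h hmem x) t) fun a =>
    h.star_star_le x y a (hmem a a.2) t

theorem mcShaneExt_eq_of_mem (h : IsPMS D star) (hmem : ∀ a ∈ A, MemDP (f a))
    (hlip : ∀ a ∈ A, ∀ b ∈ A, dpLE (star (D a b) (f b)) (f a)) {a : G} (ha : a ∈ A) :
    mcShaneExt D star A f a = f a := by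
  funext t
  have : Nonempty A := ⟨⟨a, ha⟩⟩
  unfold mcShaneExt
  refine le_antisymm (ciSup_le fun b => ?_) ?_
  · rw [h.symm]
    exact hlip a ha b b.2 t
  · calc f a t = star (D a a) (f a) t := by rw [h.self_star a (hmem a ha)]
      _ ≤ ⨆ b : A, star (D b a) (f b) t :=
        le_ciSup (bddAbove_range_of_memDP (memDP_mcShaneExt_term h hmem a) t) ⟨a, ha⟩

end McShane

/-- probabilistic McShane: extension of a probabilistic 1-Lipschitz
map from A to all of G by f̃(x) = sup_{a∈A} D(a,x) ⋆ f(a). -/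
theorem stmt7 {G : Type} (D : G → G → ℝ → ℝ)
    (star : (ℝ → ℝ) → (ℝ → ℝ) → (ℝ → ℝ)) (h : IsPMS D star)
    (hsc : SupCont star) (A : Set G) (hA : A.Nonempty) (f : G → ℝ → ℝ)
    (hmem : ∀ a ∈ A, MemDP (f a))
    (hlip : ∀ a ∈ A, ∀ b ∈ A, dpLE (star (D a b) (f b)) (f a)) :
    Lip1 D star (fun x t => ⨆ a : A, star (D (a : G) x) (f a) t) ∧
    ∀ a ∈ A, (fun t => ⨆ b : A, star (D (b : G) a) (f b) t) = f a := by
  have : Nonempty A := hA.to_subtype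
  exact ⟨lip1_mcShaneExt h hsc hmem, fun a ha => mcShaneExt_eq_of_mem h hmem hlip ha⟩
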